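/- Suppose the full dynamics has the form dx^s/dt = v(x^s) + ∑_b (x_b - x*_b(x^s)) f^0_b(x^s) and dx^b/dt depends on x^b only through J(x^s)(x^b - x*(x^s)) for an x^s-dependent matrix J and differentiable map x*. Define x̃_b = x_b - x*_b(x^s). Then x̃ satisfies dx̃_b/dt = c_b(x^s) + ∑_{b'} x̃_{b'} l_{b'b}(x^s), where c_b(x^s) = ∑_{s'} [ -∂x*_b/∂x_{s'} ] v_{s'}(x^s) and l_{b'b}(x^s) = J_{b b'}(x^s) - ∑_{s'} (∂x*_{b}/∂x_{s'}) f^0_{b' s'}(x^s) appropriately indexed; consequently, if x̃(0) = 0 then x̃(t) coincides for all t with the self-consistent memory variables m(t) solving dm_b/dt = c_b(x^s) + ∑_{b'} m_{b'} l_{b'b}(x^s), m(0)=0, and the reduced self-consistent ZMs equations reproduce the full subnetwork dynamics exactly. -/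

import Mathlib

/-! By the chain rule, `dx̃/dt = J x̃ - D (v + x̃ f⁰)` with `D` the Jacobian matrix of `x*`, which
rearranges to `c + x̃ l`. Thus `x̃` and `m` solve the same affine ODE, whose linear part
`l (xˢ(t))` is continuous in `t`; its right-hand side is therefore Lipschitz in the state,
uniformly on compact time intervals, and uniqueness of solutions with `x̃(0) = 0 = m(0)`
gives `x̃ = m`. -/

open Matrix Set

theorem eq_of_hasDerivAt_affine_of_eq {E : Type*} [NormedAddCommGroup E] [NormedSpace ℝ E]
    {A : ℝ → E →L[ℝ] E} (hA : Continuous A) (b : ℝ → E) {f g : ℝ → E} {t₀ : ℝ}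
    (hf : ∀ t, HasDerivAt f (b t + A t (f t)) t) (hg : ∀ t, HasDerivAt g (b t + A t (g t)) t)
    (h₀ : f t₀ = g t₀) : f = g := by
  ext t
  obtain ⟨a, a', ht, ht₀⟩ : ∃ a a', t ∈ Ioo a a' ∧ t₀ ∈ Ioo a a' :=
    ⟨min t t₀ - 1, max t t₀ + 1, by grind, by grind⟩
  obtain ⟨C, hC⟩ := isCompact_Icc.exists_bound_of_continuousOn hA.continuousOn (s := Icc a a')
  have hLip : ∀ s ∈ Ioo a a', LipschitzWith C.toNNReal (fun y => b s + A s y) := by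
    intro s hs
    have hAs : ‖A s‖₊ ≤ C.toNNReal := by
      rw [← NNReal.coe_le_coe, coe_nnnorm]
      exact (hC s (Ioo_subset_Icc_self hs)).trans (Real.le_coe_toNNReal C)
    simpa using (LipschitzWith.const (b s)).add ((A s).lipschitz.weaken hAs)
  exact ODE_solution_unique_of_mem_Ioo (fun s hs => (hLip s hs).lipschitzOnWith (s := univ)) ht₀
    (fun s _ => ⟨hf s, mem_univ _⟩) (fun s _ => ⟨hg s, mem_univ _⟩) h₀ ht

theorem eq_of_hasDerivAt_vecMul_of_eq {n : Type*} [Fintype n] [DecidableEq n]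
    {L : ℝ → Matrix n n ℝ} (hL : Continuous L) (b : ℝ → n → ℝ) {f g : ℝ → n → ℝ} {t₀ : ℝ}
    (hf : ∀ t, HasDerivAt f (b t + f t ᵥ* L t) t) (hg : ∀ t, HasDerivAt g (b t + g t ᵥ* L t) t)
    (h₀ : f t₀ = g t₀) : f = g := by
  have hA : Continuous fun t => LinearMap.toContinuousLinearMap (toLin' (L t)ᵀ) :=
    continuous_clm_apply.2 fun y => by simpa using hL.matrix_transpose.matrix_mulVec continuous_const
  exact eq_of_hasDerivAt_affine_of_eq hA b (by simpa [mulVec_transpose] using hf)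
    (by simpa [mulVec_transpose] using hg) h₀

theorem mulVec_eq_apply_of_single {m n : Type*} [Fintype n] [DecidableEq n]
    (φ : (n → ℝ) →L[ℝ] (m → ℝ)) {D : Matrix m n ℝ} (hD : ∀ i j, D i j = φ (Pi.single j 1) i)
    (w : n → ℝ) : D *ᵥ w = φ w := by
  have : D = LinearMap.toMatrix' φ.toLinearMap := Matrix.ext hD
  simp [this]

theorem mulVec_sub_mulVec_add_vecMul {m n R : Type*} [Fintype m] [Fintype n] [CommRing R]
    (J : Matrix m m R) (D : Matrix m n R) (F : Matrix m n R) (v : n → R) (x : m → R) :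
    J *ᵥ x - D *ᵥ (v + x ᵥ* F) = -(D *ᵥ v) + x ᵥ* (J - D * Fᵀ)ᵀ := by
  rw [vecMul_transpose, sub_mulVec, ← mulVec_mulVec, mulVec_transpose, mulVec_add]
  abel

theorem hasDerivAt_deviation {σ β : Type*} [Fintype σ] [DecidableEq σ] [Fintype β]
    {xs : ℝ → σ → ℝ} {xb : ℝ → β → ℝ} {xstar : (σ → ℝ) → β → ℝ} {φ : (σ → ℝ) →L[ℝ] (β → ℝ)}
    {D : Matrix β σ ℝ} {J : Matrix β β ℝ} {F : Matrix β σ ℝ} {v : σ → ℝ} {t : ℝ}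
    (hstar : HasFDerivAt xstar φ (xs t)) (hD : ∀ i j, D i j = φ (Pi.single j 1) i)
    (hxs : HasDerivAt xs (v + (xb t - xstar (xs t)) ᵥ* F) t)
    (hxb : HasDerivAt xb (J *ᵥ (xb t - xstar (xs t))) t) :
    HasDerivAt (fun u => xb u - xstar (xs u))
      (-(D *ᵥ v) + (xb t - xstar (xs t)) ᵥ* (J - D * Fᵀ)ᵀ) t := by
  have := hxb.sub (hstar.comp_hasDerivAt t hxs)
  rwa [← mulVec_eq_apply_of_single φ hD, mulVec_sub_mulVec_add_vecMul] at this

theorem stmt3_general {S B : ℕ}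
    (v : (Fin S → ℝ) → Fin S → ℝ)
    (f0 : (Fin S → ℝ) → Fin B → Fin S → ℝ)
    (J : (Fin S → ℝ) → Matrix (Fin B) (Fin B) ℝ)
    (xstar : (Fin S → ℝ) → Fin B → ℝ)
    (Dstar : (Fin S → ℝ) → Matrix (Fin B) (Fin S) ℝ)
    (hf0C : Continuous f0) (hJC : Continuous J)
    (hDC : Continuous Dstar)
    (hxstar : Differentiable ℝ xstar)
    (hDstar : ∀ p b s, Dstar p b s = fderiv ℝ xstar p (Pi.single s 1) b)
    (c : (Fin S → ℝ) → Fin B → ℝ)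
    (l : (Fin S → ℝ) → Fin B → Fin B → ℝ)
    (hc : ∀ p b, c p b = -∑ s', Dstar p b s' * v p s')
    (hl : ∀ p b' b, l p b' b = J p b b' - ∑ s', Dstar p b s' * f0 p b' s')
    (xs : ℝ → Fin S → ℝ) (xb : ℝ → Fin B → ℝ)
    (hxs : ∀ t s, HasDerivAt (fun u => xs u s)
      (v (xs t) s + ∑ b, (xb t b - xstar (xs t) b) * f0 (xs t) b s) t)
    (hxb : ∀ t b, HasDerivAt (fun u => xb u b)
      (∑ b', J (xs t) b b' * (xb t b' - xstar (xs t) b')) t)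
    (m : ℝ → Fin B → ℝ)
    (hm : ∀ t b, HasDerivAt (fun u => m u b)
      (c (xs t) b + ∑ b', m t b' * l (xs t) b' b) t)
    (hm0 : ∀ b, m 0 b = 0)
    (hqss0 : ∀ b, xb 0 b = xstar (xs 0) b) :
    (∀ t b, HasDerivAt (fun u => xb u b - xstar (xs u) b)
      (c (xs t) b + ∑ b', (xb t b' - xstar (xs t) b') * l (xs t) b' b) t) ∧
    (∀ t b, xb t b - xstar (xs t) b = m t b) := by
  have hc' : ∀ p, c p = -(Dstar p *ᵥ v p) := fun p => funext (hc p)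
  have hl' : ∀ p, l p = (J p - Dstar p * (f0 p)ᵀ)ᵀ := fun p => funext₂ (hl p)
  have hdev : ∀ t, HasDerivAt (fun u => xb u - xstar (xs u))
      (c (xs t) + (xb t - xstar (xs t)) ᵥ* l (xs t)) t := fun t => by
    rw [hc', hl']
    exact hasDerivAt_deviation (hxstar _).hasFDerivAt (hDstar _)
      (hasDerivAt_pi.2 (hxs t)) (hasDerivAt_pi.2 (hxb t))
  refine ⟨fun t => hasDerivAt_pi.1 (hdev t), ?_⟩
  have hxsC : Continuous xs :=
    continuous_iff_continuousAt.2 fun t => (hasDerivAt_pi.2 (hxs t)).continuousAt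
  have hlC : Continuous l := by
    rw [funext hl']
    fun_prop
  have hdev_eq_m : (fun u => xb u - xstar (xs u)) = m :=
    eq_of_hasDerivAt_vecMul_of_eq (hlC.comp hxsC) (fun t => c (xs t)) hdev
      (fun t => hasDerivAt_pi.2 (hm t)) (t₀ := 0) (funext fun b => by simp [hqss0, hm0])
  exact fun t b => congrFun (congrFun hdev_eq_m t) b

/-- Exactness of the self-consistent ZMs projection for dynamics that are
linear in the bulk variables: the deviation `x̃_b = x_b - x*_b(xˢ)` obeys
`dx̃_b/dt = c_b(xˢ) + ∑_{b'} x̃_{b'} l_{b'b}(xˢ)`, and hence, starting from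
`x̃(0) = 0`, coincides with the self-consistent memory variables `m`. -/
theorem stmt3 {S B : ℕ}
    (v : (Fin S → ℝ) → Fin S → ℝ)
    (f0 : (Fin S → ℝ) → Fin B → Fin S → ℝ)
    (J : (Fin S → ℝ) → Matrix (Fin B) (Fin B) ℝ)
    (xstar : (Fin S → ℝ) → Fin B → ℝ)
    (Dstar : (Fin S → ℝ) → Matrix (Fin B) (Fin S) ℝ)
    (hvC : Continuous v) (hf0C : Continuous f0) (hJC : Continuous J)
    (hDC : Continuous Dstar)
    (hxstar : Differentiable ℝ xstar)
    (hDstar : ∀ p b s, Dstar p b s = fderiv ℝ xstar p (Pi.single s 1) b)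
    (c : (Fin S → ℝ) → Fin B → ℝ)
    (l : (Fin S → ℝ) → Fin B → Fin B → ℝ)
    (hc : ∀ p b, c p b = -∑ s', Dstar p b s' * v p s')
    (hl : ∀ p b' b, l p b' b = J p b b' - ∑ s', Dstar p b s' * f0 p b' s')
    (xs : ℝ → Fin S → ℝ) (xb : ℝ → Fin B → ℝ)
    (hxs : ∀ t s, HasDerivAt (fun u => xs u s)
      (v (xs t) s + ∑ b, (xb t b - xstar (xs t) b) * f0 (xs t) b s) t)
    (hxb : ∀ t b, HasDerivAt (fun u => xb u b)
      (∑ b', J (xs t) b b' * (xb t b' - xstar (xs t) b')) t)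
    (m : ℝ → Fin B → ℝ)
    (hm : ∀ t b, HasDerivAt (fun u => m u b)
      (c (xs t) b + ∑ b', m t b' * l (xs t) b' b) t)
    (hm0 : ∀ b, m 0 b = 0)
    (hqss0 : ∀ b, xb 0 b = xstar (xs 0) b) :
    (∀ t b, HasDerivAt (fun u => xb u b - xstar (xs u) b)
      (c (xs t) b + ∑ b', (xb t b' - xstar (xs t) b') * l (xs t) b' b) t) ∧
    (∀ t b, xb t b - xstar (xs t) b = m t b) :=
  stmt3_general v f0 J xstar Dstar hf0C hJC hDC hxstar hDstar c l hc hl xs xb hxs hxb m hm hm0 hqss0
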